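/- Let Φ be a unital positive linear map from B(𝓗) to B(𝓚), and A, B strictly positive operators with mA ≤ B ≤ MA for 0 < m < M, and p ≤ 0. Then Φ(A ♯_p B) ≤ Φ( A^(1/2)·exp( ((M·1 - A^(-1/2)BA^(-1/2))/(M-m))·ln m^p + ((A^(-1/2)BA^(-1/2) - m·1)/(M-m))·ln M^p )·A^(1/2) ) ≤ K(m,M,p)·(Φ(A) ♯_p Φ(B)), where K(m,M,p) = (m M^p - M m^p)/((p-1)(M-m))·( ((p-1)/p)·(M^p - m^p)/(m M^p - M m^p) )^p. -/

import Mathlib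

/-!
Put `X = A^(-1/2) B A^(-1/2)`. Then `m ≤ X ≤ M`, so `A^(1/2) f(X) A^(1/2)` is monotone in `f` on
`[m, M]`, and everything reduces to the scalar chain `t^p ≤ exp(...) ≤ μ t + ν ≤ K t^p` on
`[m, M]`, where `μ t + ν` is the chord of `t^p` over `[m, M]`: the first step is concavity of
`log` (with `p ≤ 0`), the second convexity of `exp`, the third Bernoulli's inequality for
nonpositive exponents. Applying `Φ` gives the first inequality. For the second, the chord is
affine, so its perspective is `μ B + ν A`, which commutes with `Φ`; the pair `Φ A, Φ B`
satisfies the same hypotheses as `A, B`, so the last scalar step applies to it.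
-/

/-- The weighted geometric-type mean `A ♯_p B = A^(1/2) (A^(-1/2) B A^(-1/2))^p A^(1/2)`. -/
noncomputable def sharpPow {H : Type*} [NormedAddCommGroup H] [InnerProductSpace ℂ H]
    [CompleteSpace H] (p : ℝ) (A B : H →L[ℂ] H) : H →L[ℂ] H :=
  cfc (fun t : ℝ => t ^ (1 / 2 : ℝ)) A *
    cfc (fun t : ℝ => t ^ p) (cfc (fun t : ℝ => t ^ (-(1 / 2) : ℝ)) A * B *
      cfc (fun t : ℝ => t ^ (-(1 / 2) : ℝ)) A) *
    cfc (fun t : ℝ => t ^ (1 / 2 : ℝ)) A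

open Real

section Scalar

lemma one_add_mul_sub_one_le_rpow_of_nonpos {x p : ℝ} (hx : 0 < x) (hp : p ≤ 0) :
    1 + p * (x - 1) ≤ x ^ p := by
  have hlog : p * (x - 1) ≤ p * log x :=
    mul_le_mul_of_nonpos_left (log_le_sub_one_of_pos hx) hp
  calc 1 + p * (x - 1) ≤ p * log x + 1 := by linarith
    _ ≤ exp (p * log x) := add_one_le_exp _
    _ = x ^ p := by rw [rpow_def_of_pos hx, mul_comm]

variable {m M p t : ℝ}

lemma rpow_le_exp_log_interp (hm : 0 < m) (hmM : m < M) (hp : p ≤ 0) (ht : t ∈ Set.Icc m M) :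
    t ^ p ≤ exp (((M - t) / (M - m)) * log (m ^ p) + ((t - m) / (M - m)) * log (M ^ p)) := by
  obtain ⟨hmt, htM⟩ := ht
  have hMm : 0 < M - m := sub_pos.2 hmM
  have hα : 0 ≤ (M - t) / (M - m) := div_nonneg (by linarith) hMm.le
  have hβ : 0 ≤ (t - m) / (M - m) := div_nonneg (by linarith) hMm.le
  have hαβ : (M - t) / (M - m) + (t - m) / (M - m) = 1 := by field_simp; ring
  have ht_eq : (M - t) / (M - m) * m + (t - m) / (M - m) * M = t := by field_simp; ring
  have hlog := strictConcaveOn_log_Ioi.concaveOn.2 (Set.mem_Ioi.2 hm)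
    (Set.mem_Ioi.2 (hm.trans hmM)) hα hβ hαβ
  simp only [smul_eq_mul, ht_eq] at hlog
  rw [rpow_def_of_pos (hm.trans_le hmt), log_rpow hm, log_rpow (hm.trans hmM), exp_le_exp]
  linarith [mul_le_mul_of_nonpos_left hlog hp]

lemma exp_log_interp_le_chord (hm : 0 < m) (hmM : m < M) (ht : t ∈ Set.Icc m M) :
    exp (((M - t) / (M - m)) * log (m ^ p) + ((t - m) / (M - m)) * log (M ^ p)) ≤
      (M ^ p - m ^ p) / (M - m) * t + (M * m ^ p - m * M ^ p) / (M - m) := by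
  obtain ⟨hmt, htM⟩ := ht
  have hMm : 0 < M - m := sub_pos.2 hmM
  have hα : 0 ≤ (M - t) / (M - m) := div_nonneg (by linarith) hMm.le
  have hβ : 0 ≤ (t - m) / (M - m) := div_nonneg (by linarith) hMm.le
  have hαβ : (M - t) / (M - m) + (t - m) / (M - m) = 1 := by field_simp; ring
  calc _ ≤ (M - t) / (M - m) * exp (log (m ^ p)) + (t - m) / (M - m) * exp (log (M ^ p)) :=
        convexOn_exp.2 (Set.mem_univ _) (Set.mem_univ _) hα hβ hαβ
    _ = _ := by
        rw [exp_log (rpow_pos_of_pos hm p), exp_log (rpow_pos_of_pos (hm.trans hmM) p)]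
        field_simp
        ring

/-- The generalized Kantorovich constant `K(m, M, p)`. -/
noncomputable def kantorovichConst (m M p : ℝ) : ℝ :=
  (m * M ^ p - M * m ^ p) / ((p - 1) * (M - m)) *
    (((p - 1) / p) * (M ^ p - m ^ p) / (m * M ^ p - M * m ^ p)) ^ p

lemma kantorovichConst_zero (hmM : m < M) : kantorovichConst m M 0 = 1 := by
  have hMm : M - m ≠ 0 := (sub_pos.2 hmM).ne'
  simp only [kantorovichConst, rpow_zero]
  field_simp
  ring

/-- `K(m, M, p) t^p` is the curve `C (s t)^p` whose tangent line at `s t = 1` is the chord. -/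
lemma chord_le_kantorovichConst_mul_rpow (hm : 0 < m) (hmM : m < M) (hp : p ≤ 0) (ht : 0 < t) :
    (M ^ p - m ^ p) / (M - m) * t + (M * m ^ p - m * M ^ p) / (M - m) ≤
      kantorovichConst m M p * t ^ p := by
  have hMm : 0 < M - m := sub_pos.2 hmM
  rcases hp.eq_or_lt with rfl | hp
  · simp only [kantorovichConst_zero hmM, rpow_zero]
    field_simp
    linarith
  set D := m * M ^ p - M * m ^ p with hD
  have hD_neg : D < 0 := by
    nlinarith [rpow_pos_of_pos hm p, rpow_lt_rpow_of_neg hm hmM hp]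
  set C := D / ((p - 1) * (M - m))
  set s := ((p - 1) / p) * (M ^ p - m ^ p) / D
  have hC : 0 ≤ C :=
    div_nonneg_of_nonpos hD_neg.le (mul_nonpos_of_nonpos_of_nonneg (by linarith) hMm.le)
  have hs : 0 < s := div_pos_of_neg_of_neg
    (mul_neg_of_pos_of_neg (div_pos_of_neg_of_neg (by linarith) hp)
      (by linarith [rpow_lt_rpow_of_neg hm hmM hp])) hD_neg
  calc (M ^ p - m ^ p) / (M - m) * t + (M * m ^ p - m * M ^ p) / (M - m)
      = C * (1 + p * (s * t - 1)) := by
        have hp1 : p - 1 ≠ 0 := by linarith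
        simp only [C, s]
        field_simp [hp.ne, hp1, hD_neg.ne, hMm.ne']
        rw [hD]
        ring
    _ ≤ C * (s * t) ^ p :=
        mul_le_mul_of_nonneg_left (one_add_mul_sub_one_le_rpow_of_nonpos (by positivity) hp.le) hC
    _ = kantorovichConst m M p * t ^ p := by
        rw [mul_rpow hs.le ht.le, kantorovichConst]
        ring

end Scalar

section Perspective

open CFC

variable {E : Type*} [CStarAlgebra E] [PartialOrder E] [StarOrderedRing E]

/-- The operator perspective of `f`; `A ♯_p B` is the case `f t = t ^ p`. -/
noncomputable def opPerspective (f : ℝ → ℝ) (A B : E) : E :=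
  A ^ (1 / 2 : ℝ) * cfc f (A ^ (-(1 / 2) : ℝ) * B * A ^ (-(1 / 2) : ℝ)) * A ^ (1 / 2 : ℝ)

variable {A B : E} {m M : ℝ}

lemma IsSelfAdjoint.of_smul_le {c : ℝ} (hA : IsSelfAdjoint A) (h : c • A ≤ B) :
    IsSelfAdjoint B :=
  (IsSelfAdjoint.iff_of_le h).1 ((IsSelfAdjoint.all c).smul hA)

lemma opPerspective_eq_cfc (f : ℝ → ℝ) (B : E) (hA : 0 ≤ A) :
    opPerspective f A B =
      cfc (fun t : ℝ => t ^ (1 / 2 : ℝ)) A *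
        cfc f (cfc (fun t : ℝ => t ^ (-(1 / 2) : ℝ)) A * B *
          cfc (fun t : ℝ => t ^ (-(1 / 2) : ℝ)) A) *
        cfc (fun t : ℝ => t ^ (1 / 2 : ℝ)) A := by
  simp only [opPerspective, rpow_eq_cfc_real hA]

lemma isSelfAdjoint_rpow_mul_mul_rpow (hB : IsSelfAdjoint B) (r : ℝ) :
    IsSelfAdjoint (A ^ r * B * A ^ r) := by
  simpa [(IsSelfAdjoint.of_nonneg (rpow_nonneg (a := A) (y := r))).star_eq] using
    hB.conjugate (A ^ r)

lemma spectrum_rpow_neg_half_mul_mul_subset_Icc (hA : IsStrictlyPositive A) (hmA : m • A ≤ B)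
    (hBM : B ≤ M • A) :
    spectrum ℝ (A ^ (-(1 / 2) : ℝ) * B * A ^ (-(1 / 2) : ℝ)) ⊆ Set.Icc m M := by
  have hX := isSelfAdjoint_rpow_mul_mul_rpow (A := A)
    (hA.isSelfAdjoint.of_smul_le hmA) (-(1 / 2))
  have hconj (c : ℝ) :
      A ^ (-(1 / 2) : ℝ) * (c • A) * A ^ (-(1 / 2) : ℝ) = algebraMap ℝ E c := by
    rw [mul_smul_comm, smul_mul_assoc, conjugate_rpow_neg_one_half A hA,
      Algebra.algebraMap_eq_smul_one]
  have hlow := conjugate_le_conjugate_of_nonneg hmA (rpow_nonneg (a := A) (y := -(1 / 2)))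
  have hhigh := conjugate_le_conjugate_of_nonneg hBM (rpow_nonneg (a := A) (y := -(1 / 2)))
  rw [hconj] at hlow hhigh
  exact fun x hx => ⟨(algebraMap_le_iff_le_spectrum hX).1 hlow x hx,
    (le_algebraMap_iff_spectrum_le hX).1 hhigh x hx⟩

lemma opPerspective_mono {f g : ℝ → ℝ} (hA : IsStrictlyPositive A) (hmA : m • A ≤ B)
    (hBM : B ≤ M • A) (hf : ContinuousOn f (Set.Icc m M)) (hg : ContinuousOn g (Set.Icc m M))
    (hfg : ∀ t ∈ Set.Icc m M, f t ≤ g t) :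
    opPerspective f A B ≤ opPerspective g A B := by
  have hspec := spectrum_rpow_neg_half_mul_mul_subset_Icc hA hmA hBM
  exact conjugate_le_conjugate_of_nonneg
    (cfc_mono (fun t ht => hfg t (hspec ht)) (hf.mono hspec) (hg.mono hspec)) rpow_nonneg

lemma opPerspective_affine (hA : IsStrictlyPositive A) (hB : IsSelfAdjoint B) (a b : ℝ) :
    opPerspective (fun t => a * t + b) A B = a • B + b • A := by
  have hsq : A ^ (1 / 2 : ℝ) * A ^ (1 / 2 : ℝ) = A := by
    rw [← sqrt_eq_rpow (a := A)]
    exact sqrt_mul_sqrt_self A hA.nonneg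
  have hconj : A ^ (1 / 2 : ℝ) * (A ^ (-(1 / 2) : ℝ) * B * A ^ (-(1 / 2) : ℝ)) *
      A ^ (1 / 2 : ℝ) = B := by
    simp only [← mul_assoc, rpow_mul_rpow_neg _ hA, one_mul]
    rw [mul_assoc, rpow_neg_mul_rpow _ hA, mul_one]
  have hX := isSelfAdjoint_rpow_mul_mul_rpow (A := A) hB (-(1 / 2))
  rw [opPerspective, cfc_add (a := _ * B * _) (a * ·) (fun _ => b), cfc_const_mul_id a _ hX,
    cfc_const b _ hX, Algebra.algebraMap_eq_smul_one, mul_add, add_mul, mul_smul_comm,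
    smul_mul_assoc, mul_smul_comm, smul_mul_assoc, mul_one, hsq, hconj]

lemma opPerspective_const_mul (hA : IsStrictlyPositive A) (c : ℝ) {f : ℝ → ℝ}
    (hmA : m • A ≤ B) (hBM : B ≤ M • A) (hf : ContinuousOn f (Set.Icc m M)) :
    opPerspective (fun t => c * f t) A B = c • opPerspective f A B := by
  have hspec := spectrum_rpow_neg_half_mul_mul_subset_Icc hA hmA hBM
  rw [opPerspective, opPerspective, cfc_const_mul c f _ (hf.mono hspec), mul_smul_comm,
    smul_mul_assoc]

lemma PositiveLinearMap.isStrictlyPositive_map {F : Type*} [CStarAlgebra F] [PartialOrder F]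
    [StarOrderedRing F] (Φ : E →ₚ[ℂ] F) (hΦ : Φ 1 = 1) (hA : IsStrictlyPositive A) :
    IsStrictlyPositive (Φ A) := by
  nontriviality F
  have : Nontrivial E := by
    by_contra h
    rw [not_nontrivial_iff_subsingleton] at h
    exact one_ne_zero (by rw [← hΦ, Subsingleton.elim (1 : E) 0, map_zero] : (1 : F) = 0)
  obtain ⟨ε, hε, hεA⟩ := (CFC.exists_pos_algebraMap_le_iff hA.isSelfAdjoint).2
    fun x hx => hA.spectrum_pos hx
  refine (isStrictlyPositive_algebraMap hε).of_le ?_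
  calc algebraMap ℝ F ε = Φ (algebraMap ℝ E ε) := by
        rw [Algebra.algebraMap_eq_smul_one, Algebra.algebraMap_eq_smul_one, map_smul_of_tower, hΦ]
    _ ≤ Φ A := Φ.monotone' hεA

end Perspective

theorem stmt_15_general {H K : Type*}
    [NormedAddCommGroup H] [InnerProductSpace ℂ H] [CompleteSpace H]
    [NormedAddCommGroup K] [InnerProductSpace ℂ K] [CompleteSpace K]
    (Φ : (H →L[ℂ] H) →ₗ[ℂ] (K →L[ℂ] K))
    (hΦpos : ∀ T : H →L[ℂ] H, 0 ≤ T → 0 ≤ Φ T) (hΦunital : Φ 1 = 1)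
    (A B : H →L[ℂ] H) (hA0 : 0 ≤ A) (hAu : IsUnit A)
    (m M : ℝ) (hm : 0 < m) (hmM : m < M)
    (hmA : m • A ≤ B) (hBM : B ≤ M • A)
    (p : ℝ) (hp : p ≤ 0) (Kc : ℝ)
    (hK : Kc = (m * M ^ p - M * m ^ p) / ((p - 1) * (M - m)) *
      (((p - 1) / p) * (M ^ p - m ^ p) / (m * M ^ p - M * m ^ p)) ^ p) :
    Φ (sharpPow p A B) ≤
      Φ (cfc (fun t : ℝ => t ^ (1 / 2 : ℝ)) A *
        cfc (fun t : ℝ => Real.exp (((M - t) / (M - m)) * Real.log (m ^ p) +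
            ((t - m) / (M - m)) * Real.log (M ^ p)))
          (cfc (fun t : ℝ => t ^ (-(1 / 2) : ℝ)) A * B *
            cfc (fun t : ℝ => t ^ (-(1 / 2) : ℝ)) A) *
        cfc (fun t : ℝ => t ^ (1 / 2 : ℝ)) A) ∧
    Φ (cfc (fun t : ℝ => t ^ (1 / 2 : ℝ)) A *
        cfc (fun t : ℝ => Real.exp (((M - t) / (M - m)) * Real.log (m ^ p) +
            ((t - m) / (M - m)) * Real.log (M ^ p)))
          (cfc (fun t : ℝ => t ^ (-(1 / 2) : ℝ)) A * B *
            cfc (fun t : ℝ => t ^ (-(1 / 2) : ℝ)) A) *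
        cfc (fun t : ℝ => t ^ (1 / 2 : ℝ)) A) ≤
      Kc • sharpPow p (Φ A) (Φ B) := by
  let Ψ := PositiveLinearMap.mk₀ Φ hΦpos
  have hΦ_mono : Monotone Φ := Ψ.monotone'
  have hA : IsStrictlyPositive A := hAu.isStrictlyPositive hA0
  have hΦA : IsStrictlyPositive (Φ A) := Ψ.isStrictlyPositive_map hΦunital hA
  have hmΦ : m • Φ A ≤ Φ B := LinearMapClass.map_smul_of_tower Φ m A ▸ hΦ_mono hmA
  have hΦM : Φ B ≤ M • Φ A := LinearMapClass.map_smul_of_tower Φ M A ▸ hΦ_mono hBM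
  have hB : IsSelfAdjoint B := hA.isSelfAdjoint.of_smul_le hmA
  have hpow : ContinuousOn (fun t : ℝ => t ^ p) (Set.Icc m M) :=
    continuousOn_id.rpow_const fun t ht => Or.inl (hm.trans_le ht.1).ne'
  rw [sharpPow, sharpPow, ← opPerspective_eq_cfc _ _ hA0, ← opPerspective_eq_cfc _ _ hA0,
    ← opPerspective_eq_cfc _ _ hΦA.nonneg, hK]
  refine ⟨hΦ_mono (opPerspective_mono hA hmA hBM hpow (by fun_prop)
    fun t ht => rpow_le_exp_log_interp hm hmM hp ht), ?_⟩
  calc _ ≤ Φ (opPerspective (fun t => (M ^ p - m ^ p) / (M - m) * t +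
          (M * m ^ p - m * M ^ p) / (M - m)) A B) :=
        hΦ_mono (opPerspective_mono hA hmA hBM (by fun_prop) (by fun_prop)
          fun t ht => exp_log_interp_le_chord hm hmM ht)
    _ = opPerspective (fun t => (M ^ p - m ^ p) / (M - m) * t +
          (M * m ^ p - m * M ^ p) / (M - m)) (Φ A) (Φ B) := by
        rw [opPerspective_affine hA hB, opPerspective_affine hΦA
          (hΦA.isSelfAdjoint.of_smul_le hmΦ), map_add, LinearMapClass.map_smul_of_tower,
          LinearMapClass.map_smul_of_tower]
    _ ≤ opPerspective (fun t => kantorovichConst m M p * t ^ p) (Φ A) (Φ B) :=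
        opPerspective_mono hΦA hmΦ hΦM (by fun_prop) (continuousOn_const.mul hpow)
          fun t ht => chord_le_kantorovichConst_mul_rpow hm hmM hp (hm.trans_le ht.1)
    _ = _ := opPerspective_const_mul hΦA _ hmΦ hΦM hpow

/-- Ratio-type reverse of `Φ(A) ♯_p Φ(B) ≤ Φ(A ♯_p B)` for `p ≤ 0`. -/
theorem stmt_15 {H K : Type*}
    [NormedAddCommGroup H] [InnerProductSpace ℂ H] [CompleteSpace H]
    [NormedAddCommGroup K] [InnerProductSpace ℂ K] [CompleteSpace K]
    (Φ : (H →L[ℂ] H) →ₗ[ℂ] (K →L[ℂ] K))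
    (hΦpos : ∀ T : H →L[ℂ] H, 0 ≤ T → 0 ≤ Φ T) (hΦunital : Φ 1 = 1)
    (A B : H →L[ℂ] H) (hA0 : 0 ≤ A) (hAu : IsUnit A) (hB0 : 0 ≤ B) (hBu : IsUnit B)
    (m M : ℝ) (hm : 0 < m) (hmM : m < M)
    (hmA : m • A ≤ B) (hBM : B ≤ M • A)
    (p : ℝ) (hp : p ≤ 0) (Kc : ℝ)
    (hK : Kc = (m * M ^ p - M * m ^ p) / ((p - 1) * (M - m)) *
      (((p - 1) / p) * (M ^ p - m ^ p) / (m * M ^ p - M * m ^ p)) ^ p) :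
    Φ (sharpPow p A B) ≤
      Φ (cfc (fun t : ℝ => t ^ (1 / 2 : ℝ)) A *
        cfc (fun t : ℝ => Real.exp (((M - t) / (M - m)) * Real.log (m ^ p) +
            ((t - m) / (M - m)) * Real.log (M ^ p)))
          (cfc (fun t : ℝ => t ^ (-(1 / 2) : ℝ)) A * B *
            cfc (fun t : ℝ => t ^ (-(1 / 2) : ℝ)) A) *
        cfc (fun t : ℝ => t ^ (1 / 2 : ℝ)) A) ∧
    Φ (cfc (fun t : ℝ => t ^ (1 / 2 : ℝ)) A *
        cfc (fun t : ℝ => Real.exp (((M - t) / (M - m)) * Real.log (m ^ p) +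
            ((t - m) / (M - m)) * Real.log (M ^ p)))
          (cfc (fun t : ℝ => t ^ (-(1 / 2) : ℝ)) A * B *
            cfc (fun t : ℝ => t ^ (-(1 / 2) : ℝ)) A) *
        cfc (fun t : ℝ => t ^ (1 / 2 : ℝ)) A) ≤
      Kc • sharpPow p (Φ A) (Φ B) :=
  stmt_15_general Φ hΦpos hΦunital A B hA0 hAu m M hm hmM hmA hBM p hp Kc hK
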